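/- arXiv:1711.09088 — 2 statements merged into one kernel-verified Lean document; each statement's English description precedes it below -/
import Mathlib

section
/- Let θ : ℝ → ℝ be defined by θ(x) = ∫₀ˣ ϑ(s) ds, where ϑ ∈ W^{3,∞}(ℝ) satisfies ϑ(x) = 2x for |x| ≤ 1, ϑ(x) = 2[x − (x−1)³] for 1 < x ≤ 1 + 1/√3, ϑ(x) = 2[x − (x+1)³] for −(1+1/√3) ≤ x < −1, ϑ' < 0 for 1 + 1/√3 < |x| < 2, and ϑ = 0 for |x| ≥ 2. Then θ(x) ≥ (ϑ(x))²/4 = (θ'(x))²/4 for all x ∈ ℝ. -/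
/-- For the 1D virial weight `θ(x) = ∫₀ˣ ϑ(s) ds`, where `ϑ` is the piecewise-defined
`W^{3,∞}` profile (`ϑ(x) = 2x` for `|x| ≤ 1`, `ϑ(x) = 2[x-(x-1)³]` on `(1, 1+1/√3]`,
`ϑ(x) = 2[x-(x+1)³]` on `[-(1+1/√3), -1)`, `ϑ' < 0` for `1+1/√3 < |x| < 2`, `ϑ = 0`
for `|x| ≥ 2`), one has `θ(x) ≥ ϑ(x)²/4 = (θ'(x))²/4` for all `x ∈ ℝ`. -/
theorem weight_dominates_derivative_sq (ϑ : ℝ → ℝ)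
    (hreg : ContDiff ℝ 1 ϑ)
    (hbd : ∀ k : ℕ, k ≤ 3 → ∃ Ck : ℝ, ∀ x : ℝ, |iteratedDeriv k ϑ x| ≤ Ck)
    (h1 : ∀ x : ℝ, |x| ≤ 1 → ϑ x = 2 * x)
    (h2 : ∀ x : ℝ, 1 < x → x ≤ 1 + 1 / Real.sqrt 3 → ϑ x = 2 * (x - (x - 1) ^ 3))
    (h3 : ∀ x : ℝ, -(1 + 1 / Real.sqrt 3) ≤ x → x < -1 → ϑ x = 2 * (x - (x + 1) ^ 3))
    (h4 : ∀ x : ℝ, 1 + 1 / Real.sqrt 3 < |x| → |x| < 2 → deriv ϑ x < 0)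
    (h5 : ∀ x : ℝ, 2 ≤ |x| → ϑ x = 0)
    (θ : ℝ → ℝ) (hθ : ∀ x : ℝ, θ x = ∫ s in (0 : ℝ)..x, ϑ s)
    (hθ' : ∀ x : ℝ, deriv θ x = ϑ x) :
    ∀ x : ℝ, θ x ≥ (ϑ x) ^ 2 / 4 ∧ (ϑ x) ^ 2 / 4 = (deriv θ x) ^ 2 / 4 := by
  -- basic facts about the constants
  set a : ℝ := 1 + 1 / Real.sqrt 3 with ha
  have hs3pos : (0:ℝ) < Real.sqrt 3 := Real.sqrt_pos.2 (by norm_num)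
  have hs3 : (1:ℝ) < Real.sqrt 3 := by
    nlinarith [Real.sq_sqrt (show (0:ℝ) ≤ 3 by norm_num)]
  have hinv_pos : (0:ℝ) < 1 / Real.sqrt 3 := by positivity
  have hinv_lt : 1 / Real.sqrt 3 < 1 := by
    rw [div_lt_one hs3pos]; exact hs3
  have hsq13 : (1 / Real.sqrt 3) ^ 2 = 1/3 := by
    rw [div_pow, one_pow, Real.sq_sqrt (by norm_num : (0:ℝ) ≤ 3)]
  have ha1 : 1 < a := by simp only [ha]; linarith
  have ha2 : a < 2 := by simp only [ha]; linarith
  -- regularity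
  have hϑc : Continuous ϑ := hreg.continuous
  have hϑd : Differentiable ℝ ϑ := hreg.differentiable one_ne_zero
  have hdc : Continuous (deriv ϑ) := hreg.continuous_deriv le_rfl
  have hθD : ∀ x : ℝ, HasDerivAt θ (ϑ x) x := by
    intro x
    have hfun : θ = fun u => ∫ s in (0:ℝ)..u, ϑ s := funext hθ
    rw [hfun]
    exact (hϑc.integral_hasStrictDerivAt 0 x).hasDerivAt
  have hθcont : Continuous θ := by
    have : Differentiable ℝ θ := fun x => (hθD x).differentiableAt
    exact this.continuous
  -- the comparison function g
  set g : ℝ → ℝ := fun y => θ y - ϑ y ^ 2 / 4 with hg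
  have hgD : ∀ x : ℝ, HasDerivAt g (ϑ x * (1 - deriv ϑ x / 2)) x := by
    intro x
    have h2' : HasDerivAt (fun y => ϑ y ^ 2 / 4) ((2 * ϑ x ^ 1 * deriv ϑ x) / 4) x :=
      (((hϑd x).hasDerivAt.pow 2).div_const 4)
    have : HasDerivAt g (ϑ x - 2 * ϑ x ^ 1 * deriv ϑ x / 4) x := (hθD x).sub h2'
    convert this using 1
    ring
  have hgcont : Continuous g := by
    have : Differentiable ℝ g := fun x => (hgD x).differentiableAt
    exact this.continuous
  -- on [-1,1] we have θ x = x^2 and g x = 0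
  have hθsq : ∀ y : ℝ, |y| ≤ 1 → θ y = y ^ 2 := by
    intro y hy
    rw [hθ]
    have heq : Set.EqOn ϑ (fun s => 2 * s) (Set.uIcc 0 y) := by
      intro s hs
      apply h1
      rcases Set.mem_uIcc.1 hs with h | h
      · rw [abs_le]
        constructor
        · linarith [h.1, abs_le.1 hy |>.1, abs_le.1 hy |>.2,
            (abs_le.1 hy).1]
        · calc s ≤ y := h.2
            _ ≤ 1 := (abs_le.1 hy).2
      · rw [abs_le]
        constructor
        · calc (-1:ℝ) ≤ y := (abs_le.1 hy).1
            _ ≤ s := h.1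
        · linarith [h.2]
    rw [intervalIntegral.integral_congr heq, intervalIntegral.integral_const_mul]
    rw [integral_id]
    ring
  have hgzero : ∀ y : ℝ, |y| ≤ 1 → g y = 0 := by
    intro y hy
    simp only [hg]
    rw [hθsq y hy, h1 y hy]
    ring
  have hg1 : g 1 = 0 := hgzero 1 (by norm_num)
  have hgm1 : g (-1) = 0 := hgzero (-1) (by norm_num)
  -- derivative of ϑ on (1, a)
  have hderiv_mid : ∀ x ∈ Set.Ioo (1:ℝ) a, deriv ϑ x = 2 - 6 * (x - 1) ^ 2 := by
    intro x hx
    have hev : ϑ =ᶠ[nhds x] fun y => 2 * (y - (y - 1) ^ 3) := by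
      filter_upwards [Ioo_mem_nhds hx.1 hx.2] with y hy
      exact h2 y hy.1 hy.2.le
    rw [hev.deriv_eq]
    have hD : HasDerivAt (fun y : ℝ => 2 * (y - (y - 1) ^ 3))
        (2 * (1 - (3 : ℕ) * (x - 1) ^ 2 * 1)) x := by
      exact ((hasDerivAt_id x).sub (((hasDerivAt_id x).sub_const 1).pow 3)).const_mul 2
    rw [hD.deriv]
    push_cast
    ring
  -- derivative of ϑ on (-a, -1)
  have hderiv_midneg : ∀ x ∈ Set.Ioo (-a) (-1:ℝ), deriv ϑ x = 2 - 6 * (x + 1) ^ 2 := by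
    intro x hx
    have hev : ϑ =ᶠ[nhds x] fun y => 2 * (y - (y + 1) ^ 3) := by
      filter_upwards [Ioo_mem_nhds hx.1 hx.2] with y hy
      exact h3 y hy.1.le hy.2
    rw [hev.deriv_eq]
    have hD : HasDerivAt (fun y : ℝ => 2 * (y - (y + 1) ^ 3))
        (2 * (1 - (3 : ℕ) * (x + 1) ^ 2 * 1)) x := by
      exact ((hasDerivAt_id x).sub (((hasDerivAt_id x).add_const 1).pow 3)).const_mul 2
    rw [hD.deriv]
    push_cast
    ring
  -- derivative of ϑ at a is ≤ 0 (limit from the right)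
  have hderiv_a : deriv ϑ a ≤ 0 := by
    have htend : Filter.Tendsto (deriv ϑ) (nhdsWithin a (Set.Ioi a)) (nhds (deriv ϑ a)) :=
      (hdc.tendsto a).mono_left nhdsWithin_le_nhds
    refine le_of_tendsto htend ?_
    filter_upwards [Ioo_mem_nhdsGT_of_mem (Set.mem_Ico.2 ⟨le_refl a, ha2⟩)] with y hy
    have hya : a < |y| := by rw [abs_of_pos (by linarith [hy.1, ha1])]; exact hy.1
    have hy2 : |y| < 2 := by rw [abs_of_pos (by linarith [hy.1, ha1])]; exact hy.2
    exact (h4 y hya hy2).le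
  -- derivative of ϑ at -a is ≤ 0 (limit from the left)
  have hderiv_ma : deriv ϑ (-a) ≤ 0 := by
    have htend : Filter.Tendsto (deriv ϑ) (nhdsWithin (-a) (Set.Iio (-a)))
        (nhds (deriv ϑ (-a))) :=
      (hdc.tendsto (-a)).mono_left nhdsWithin_le_nhds
    refine le_of_tendsto htend ?_
    filter_upwards [Ioo_mem_nhdsLT_of_mem (Set.mem_Ioc.2 ⟨show (-2:ℝ) < -a by linarith, le_refl (-a)⟩)]
      with y hy
    have hya : a < |y| := by rw [abs_of_neg (by linarith [hy.2, ha1])]; linarith [hy.2]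
    have hy2 : |y| < 2 := by rw [abs_of_neg (by linarith [hy.2, ha1])]; linarith [hy.1]
    exact (h4 y hya hy2).le
  -- deriv ϑ ≤ 2 on (1,2)
  have hderiv_le : ∀ x ∈ Set.Ioo (1:ℝ) 2, deriv ϑ x ≤ 2 := by
    intro x hx
    rcases lt_trichotomy x a with h | h | h
    · rw [hderiv_mid x ⟨hx.1, h⟩]; nlinarith [sq_nonneg (x - 1)]
    · rw [h]; linarith [hderiv_a]
    · have hxa : a < |x| := by rw [abs_of_pos (by linarith [hx.1])]; exact h
      have hx2 : |x| < 2 := by rw [abs_of_pos (by linarith [hx.1])]; exact hx.2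
      linarith [h4 x hxa hx2]
  -- deriv ϑ ≤ 2 on (-2,-1)
  have hderiv_le_neg : ∀ x ∈ Set.Ioo (-2:ℝ) (-1), deriv ϑ x ≤ 2 := by
    intro x hx
    rcases lt_trichotomy x (-a) with h | h | h
    · have hxa : a < |x| := by rw [abs_of_neg (by linarith [hx.2])]; linarith
      have hx2 : |x| < 2 := by rw [abs_of_neg (by linarith [hx.2])]; linarith [hx.1]
      linarith [h4 x hxa hx2]
    · rw [h]; linarith [hderiv_ma]
    · rw [hderiv_midneg x ⟨h, hx.2⟩]; nlinarith [sq_nonneg (x + 1)]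
  -- ϑ is strictly antitone on [a,2]
  have hanti : StrictAntiOn ϑ (Set.Icc a 2) := by
    apply strictAntiOn_of_deriv_neg (convex_Icc a 2) hϑc.continuousOn
    intro y hy
    rw [interior_Icc] at hy
    have hya : a < |y| := by rw [abs_of_pos (by linarith [hy.1, ha1])]; exact hy.1
    have hy2 : |y| < 2 := by rw [abs_of_pos (by linarith [hy.1, ha1])]; exact hy.2
    exact h4 y hya hy2
  -- ϑ is strictly antitone on [-2,-a]
  have hantineg : StrictAntiOn ϑ (Set.Icc (-2) (-a)) := by
    apply strictAntiOn_of_deriv_neg (convex_Icc (-2) (-a)) hϑc.continuousOn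
    intro y hy
    rw [interior_Icc] at hy
    have hya : a < |y| := by rw [abs_of_neg (by linarith [hy.2, ha1])]; linarith [hy.2]
    have hy2 : |y| < 2 := by rw [abs_of_neg (by linarith [hy.2, ha1])]; linarith [hy.1]
    exact h4 y hya hy2
  have hϑ2 : ϑ 2 = 0 := h5 2 (by norm_num)
  have hϑm2 : ϑ (-2) = 0 := h5 (-2) (by rw [abs_of_neg (by norm_num)]; norm_num)
  -- ϑ ≥ 0 on [1,2]
  have hϑpos : ∀ x ∈ Set.Icc (1:ℝ) 2, 0 ≤ ϑ x := by
    intro x hx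
    rcases le_or_gt x a with h | h
    · rcases eq_or_lt_of_le hx.1 with h1' | h1'
      · rw [← h1', h1 1 (by norm_num)]; norm_num
      · rw [h2 x h1' h]
        nlinarith [hx.1, hinv_lt, h, sq_nonneg (x - 1)]
    · rcases eq_or_lt_of_le hx.2 with h2' | h2'
      · rw [h2', hϑ2]
      · have := hanti (Set.mem_Icc.2 ⟨h.le, hx.2⟩) (Set.mem_Icc.2 ⟨by linarith, le_refl 2⟩) h2'
        rw [hϑ2] at this
        linarith
  -- ϑ ≤ 0 on [-2,-1]
  have hϑneg : ∀ x ∈ Set.Icc (-2:ℝ) (-1), ϑ x ≤ 0 := by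
    intro x hx
    rcases le_or_gt (-a) x with h | h
    · rcases eq_or_lt_of_le hx.2 with h1' | h1'
      · rw [h1', h1 (-1) (by norm_num)]; norm_num
      · rw [h3 x h h1']
        nlinarith [hx.2, sq_nonneg (x + 1), hinv_lt]
    · rcases eq_or_lt_of_le hx.1 with h2' | h2'
      · rw [← h2', hϑm2]
      · have := hantineg (Set.mem_Icc.2 ⟨le_refl (-2), by linarith⟩)
          (Set.mem_Icc.2 ⟨h2'.le, h.le⟩) h2'
        rw [hϑm2] at this
        linarith
  -- g is monotone on [1,2]
  have hgmono : MonotoneOn g (Set.Icc (1:ℝ) 2) := by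
    apply monotoneOn_of_deriv_nonneg (convex_Icc 1 2) hgcont.continuousOn
    · intro x _; exact (hgD x).differentiableAt.differentiableWithinAt
    · intro x hx
      rw [interior_Icc] at hx
      rw [(hgD x).deriv]
      apply mul_nonneg (hϑpos x ⟨hx.1.le, hx.2.le⟩)
      linarith [hderiv_le x hx]
  -- g is antitone on [-2,-1]
  have hganti : AntitoneOn g (Set.Icc (-2:ℝ) (-1)) := by
    apply antitoneOn_of_deriv_nonpos (convex_Icc (-2) (-1)) hgcont.continuousOn
    · intro x _; exact (hgD x).differentiableAt.differentiableWithinAt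
    · intro x hx
      rw [interior_Icc] at hx
      rw [(hgD x).deriv]
      apply mul_nonpos_of_nonpos_of_nonneg (hϑneg x ⟨hx.1.le, hx.2.le⟩)
      linarith [hderiv_le_neg x hx]
  -- g ≥ 0 on [1,2] and [-2,-1]
  have hgpos : ∀ x ∈ Set.Icc (1:ℝ) 2, 0 ≤ g x := by
    intro x hx
    have := hgmono (Set.mem_Icc.2 ⟨le_refl 1, by norm_num⟩) hx hx.1
    rw [hg1] at this
    exact this
  have hgposneg : ∀ x ∈ Set.Icc (-2:ℝ) (-1), 0 ≤ g x := by
    intro x hx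
    have := hganti hx (Set.mem_Icc.2 ⟨by norm_num, le_refl (-1)⟩) hx.2
    rw [hgm1] at this
    exact this
  -- θ is constant on the tails
  have hθtail : ∀ x : ℝ, 2 ≤ x → θ x = θ 2 := by
    intro x hx
    rw [hθ x, hθ 2,
      ← intervalIntegral.integral_add_adjacent_intervals
        (hϑc.intervalIntegrable 0 2) (hϑc.intervalIntegrable 2 x)]
    have hz : ∫ s in (2:ℝ)..x, ϑ s = 0 := by
      have heq : Set.EqOn ϑ 0 (Set.uIcc 2 x) := by
        intro s hs
        rw [Set.uIcc_of_le hx] at hs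
        exact h5 s (by rw [abs_of_nonneg (by linarith [hs.1])]; exact hs.1)
      rw [intervalIntegral.integral_congr heq]
      simp
    rw [hz, add_zero]
  have hθtailneg : ∀ x : ℝ, x ≤ -2 → θ x = θ (-2) := by
    intro x hx
    rw [hθ x, hθ (-2),
      ← intervalIntegral.integral_add_adjacent_intervals
        (hϑc.intervalIntegrable 0 (-2)) (hϑc.intervalIntegrable (-2) x)]
    have hz : ∫ s in (-2:ℝ)..x, ϑ s = 0 := by
      have heq : Set.EqOn ϑ 0 (Set.uIcc (-2) x) := by
        intro s hs
        rw [Set.uIcc_of_ge hx] at hs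
        exact h5 s (by rw [abs_of_nonpos (by linarith [hs.2])]; linarith [hs.2])
      rw [intervalIntegral.integral_congr heq]
      simp
    rw [hz, add_zero]
  -- main inequality
  have main : ∀ x : ℝ, θ x ≥ ϑ x ^ 2 / 4 := by
    intro x
    rcases le_or_gt x (-2) with hc | hc
    · rw [h5 x (by rw [abs_of_nonpos (by linarith)]; linarith), hθtailneg x hc]
      have h0 : 0 ≤ g (-2) := hgposneg (-2) (Set.mem_Icc.2 ⟨le_refl _, by norm_num⟩)
      simp only [hg, hϑm2] at h0
      norm_num at h0 ⊢
      linarith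
    rcases le_or_gt x (-1) with hc2 | hc2
    · have h0 : 0 ≤ g x := hgposneg x (Set.mem_Icc.2 ⟨hc.le, hc2⟩)
      simp only [hg] at h0
      linarith
    rcases le_or_gt x 1 with hc3 | hc3
    · have h0 : g x = 0 := hgzero x (abs_le.2 ⟨by linarith, hc3⟩)
      simp only [hg] at h0
      linarith
    rcases le_or_gt x 2 with hc4 | hc4
    · have h0 : 0 ≤ g x := hgpos x (Set.mem_Icc.2 ⟨hc3.le, hc4⟩)
      simp only [hg] at h0
      linarith
    · rw [h5 x (by rw [abs_of_nonneg (by linarith)]; linarith), hθtail x hc4.le]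
      have h0 : 0 ≤ g 2 := hgpos 2 (Set.mem_Icc.2 ⟨by norm_num, le_refl _⟩)
      simp only [hg, hϑ2] at h0
      norm_num at h0 ⊢
      linarith
  intro x
  exact ⟨main x, by rw [hθ' x]⟩
end

section
/- Let d ≥ 1, 0 < b < min{2,d}, α_* < α < α*. If u ∈ H¹(ℝ^d) satisfies ‖∇u‖_{L²} ‖u‖^σ_{L²} ≥ (1+δ') ‖∇Q‖_{L²}‖Q‖^σ_{L²} and E(u) M(u)^σ ≤ (1−δ) E(Q) M(Q)^σ for some δ, δ' > 0, then for all sufficiently small ε > 0 there is c > 0 such that 8‖∇u‖²_{L²} − (4(dα+2b)/(α+2)) ∫|x|^(−b)|u|^(α+2) dx + ε‖∇u‖²_{L²} ≤ −c < 0. -/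
/-!
Put `K = dα + 2b`; the lower bound on `α` says exactly `K > 4`. Multiplying the virial functional
by `M(u)^σ` and splitting it as `4K E(u) M(u)^σ + (ε + 8 - 2K) ‖∇u‖² M(u)^σ`, the energy hypothesis
bounds the first term by `2(K - 4)(1 - δ) (‖∇Q‖ ‖Q‖^σ)²`, and, once `ε ≤ 2(K - 4)`, the gradient
hypothesis bounds the second by `(ε + 8 - 2K) (‖∇Q‖ ‖Q‖^σ)²`. The sum is
`(ε - 2(K - 4)δ) (‖∇Q‖ ‖Q‖^σ)²`, which is negative for `ε < 2(K - 4)δ`.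
-/

lemma four_lt_mul_add_of_div_lt {d b α : ℝ} (hd : 0 < d) (hlow : (4 - 2 * b) / d < α) :
    4 < d * α + 2 * b := by
  have := (div_lt_iff₀ hd).mp hlow
  linarith

lemma virial_eq_energy_add (K α ε G P : ℝ) :
    8 * G ^ 2 - (4 * K / (α + 2)) * P + ε * G ^ 2
      = 4 * K * ((1 / 2) * G ^ 2 - (1 / (α + 2)) * P) + (ε + 8 - 2 * K) * G ^ 2 := by
  ring

lemma sq_le_sq_mul_sq_rpow {q G N σ : ℝ} (hN : 0 ≤ N) (hq : 0 ≤ q) (h : q ≤ G * N ^ σ) :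
    q ^ 2 ≤ G ^ 2 * (N ^ 2) ^ σ := by
  rw [← Real.rpow_pow_comm hN, ← mul_pow]
  exact pow_le_pow_left₀ hq h 2

lemma sq_rpow_pos_of_mul_rpow_pos {G N σ : ℝ} (hN : 0 ≤ N) (h : 0 < G * N ^ σ) :
    0 < (N ^ 2) ^ σ := by
  rw [← Real.rpow_pow_comm hN]
  exact sq_pos_of_ne_zero (right_ne_zero_of_mul h.ne')

lemma virial_mul_le {K δ ε q E Gsq M : ℝ} (hK : 4 < K) (hε : ε ≤ 2 * (K - 4))
    (henergy : E * M ≤ (1 - δ) * ((K - 4) / (2 * K) * q ^ 2)) (hgrad : q ^ 2 ≤ Gsq * M) :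
    (4 * K * E + (ε + 8 - 2 * K) * Gsq) * M ≤ (ε - 2 * (K - 4) * δ) * q ^ 2 := by
  have henergy' : 4 * K * (E * M) ≤ 2 * (K - 4) * (1 - δ) * q ^ 2 := by
    calc 4 * K * (E * M) ≤ 4 * K * ((1 - δ) * ((K - 4) / (2 * K) * q ^ 2)) := by gcongr
      _ = 2 * (K - 4) * (1 - δ) * q ^ 2 := by field_simp; ring
  have hgrad' : (ε + 8 - 2 * K) * (Gsq * M) ≤ (ε + 8 - 2 * K) * q ^ 2 :=
    mul_le_mul_of_nonpos_left hgrad (by linarith)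
  linear_combination henergy' + hgrad'

theorem refined_virial_estimate_general (d : ℕ) (b α σ : ℝ) (hd : 1 ≤ d)
    (hlow : (4 - 2 * b) / (d : ℝ) < α)
    (δ δ' : ℝ) (hδ : 0 < δ) (hδ' : 0 < δ')
    (gQ nQ EQMQ : ℝ) (hgQ : 0 < gQ) (hnQ : 0 < nQ)
    (hEQMQ : EQMQ = (((d : ℝ) * α - (4 - 2 * b)) / (2 * ((d : ℝ) * α + 2 * b)))
      * (gQ * nQ ^ σ) ^ 2)
    (u : EuclideanSpace ℝ (Fin d) → ℂ) (G N P : ℝ)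
    (hN : N = Real.sqrt (∫ x : EuclideanSpace ℝ (Fin d), ‖u x‖ ^ 2))
    (hgrad : G * N ^ σ ≥ (1 + δ') * (gQ * nQ ^ σ))
    (henergy : ((1 / 2) * G ^ 2 - (1 / (α + 2)) * P) * (N ^ 2) ^ σ ≤ (1 - δ) * EQMQ) :
    ∃ ε₀ : ℝ, 0 < ε₀ ∧ ∀ ε : ℝ, 0 < ε → ε < ε₀ → ∃ c : ℝ, 0 < c ∧
      8 * G ^ 2 - (4 * ((d : ℝ) * α + 2 * b) / (α + 2)) * P + ε * G ^ 2 ≤ -c := by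
  set K := (d : ℝ) * α + 2 * b
  set q := gQ * nQ ^ σ
  have hK : 4 < K := four_lt_mul_add_of_div_lt (by exact_mod_cast hd) hlow
  have hq : 0 < q := by positivity
  have hN0 : 0 ≤ N := hN ▸ Real.sqrt_nonneg _
  have hq_le : q ≤ G * N ^ σ := le_trans (le_mul_of_one_le_left hq.le (by linarith)) hgrad
  have hM : 0 < (N ^ 2) ^ σ := sq_rpow_pos_of_mul_rpow_pos hN0 (hq.trans_le hq_le)
  rw [hEQMQ, show (d : ℝ) * α - (4 - 2 * b) = K - 4 by ring] at henergy
  refine ⟨2 * (K - 4) * min 1 δ, by positivity, fun ε _ hε₀ => ?_⟩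
  have hε : ε < 2 * (K - 4) :=
    hε₀.trans_le (mul_le_of_le_one_right (by linarith) (min_le_left 1 δ))
  have hεδ : ε < 2 * (K - 4) * δ :=
    hε₀.trans_le (mul_le_mul_of_nonneg_left (min_le_right 1 δ) (by linarith))
  refine ⟨(2 * (K - 4) * δ - ε) * q ^ 2 / (N ^ 2) ^ σ,
    div_pos (mul_pos (by linarith) (pow_pos hq 2)) hM, ?_⟩
  rw [virial_eq_energy_add, ← neg_div, le_div_iff₀ hM]
  linarith [virial_mul_le hK hε.le henergy (sq_le_sq_mul_sq_rpow hN0 hq.le hq_le)]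

/-- Refined virial estimate above the ground state: if
`‖∇u‖ ‖u‖^σ ≥ (1+δ') ‖∇Q‖ ‖Q‖^σ` and `E(u) M(u)^σ ≤ (1-δ) E(Q) M(Q)^σ`, then for all
sufficiently small `ε > 0` there is `c > 0` with
`8‖∇u‖² - (4(dα+2b)/(α+2)) ∫ |x|^(-b)|u|^(α+2) + ε‖∇u‖² ≤ -c`. -/
theorem refined_virial_estimate (d : ℕ) (b α σ : ℝ) (hd : 1 ≤ d)
    (hb : 0 < b) (hb' : b < min 2 (d : ℝ))
    (hlow : (4 - 2 * b) / (d : ℝ) < α)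
    (hhigh : 3 ≤ d → α < (4 - 2 * b) / ((d : ℝ) - 2))
    (hσ : σ = (4 - 2 * b - ((d : ℝ) - 2) * α) / ((d : ℝ) * α - (4 - 2 * b)))
    (δ δ' : ℝ) (hδ : 0 < δ) (hδ' : 0 < δ')
    (gQ nQ EQMQ : ℝ) (hgQ : 0 < gQ) (hnQ : 0 < nQ)
    (hEQMQ : EQMQ = (((d : ℝ) * α - (4 - 2 * b)) / (2 * ((d : ℝ) * α + 2 * b)))
      * (gQ * nQ ^ σ) ^ 2)
    (u : EuclideanSpace ℝ (Fin d) → ℂ) (G N P : ℝ)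
    (hG : G = Real.sqrt (∫ x : EuclideanSpace ℝ (Fin d), ‖fderiv ℝ u x‖ ^ 2))
    (hN : N = Real.sqrt (∫ x : EuclideanSpace ℝ (Fin d), ‖u x‖ ^ 2))
    (hP : P = ∫ x : EuclideanSpace ℝ (Fin d), ‖x‖ ^ (-b) * ‖u x‖ ^ (α + 2))
    (hP0 : 0 ≤ P)
    (hgrad : G * N ^ σ ≥ (1 + δ') * (gQ * nQ ^ σ))
    (henergy : ((1 / 2) * G ^ 2 - (1 / (α + 2)) * P) * (N ^ 2) ^ σ ≤ (1 - δ) * EQMQ) :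
    ∃ ε₀ : ℝ, 0 < ε₀ ∧ ∀ ε : ℝ, 0 < ε → ε < ε₀ → ∃ c : ℝ, 0 < c ∧
      8 * G ^ 2 - (4 * ((d : ℝ) * α + 2 * b) / (α + 2)) * P + ε * G ^ 2 ≤ -c :=
  refined_virial_estimate_general d b α σ hd hlow δ δ' hδ hδ' gQ nQ EQMQ hgQ hnQ hEQMQ u G N P hN
    hgrad henergy
end
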